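/- arXiv:1409.6775 — 6 statements merged into one kernel-verified Lean document; each statement's English description precedes it below -/
import Mathlib

section
/- Lemma 3 (constraint equivalence for System 1): under the stated assumptions, the flow-balance constraint ∑_{j≠i} (β_ij − β_ji) = λ_i − ∑_{j≠i} λ_j·p_ji holding for every station i is equivalent to the relative utilizations being equal across stations, i.e., γ_i = γ_j for all i,j, where γ_i := π_i/(λ_i − λdel_i). -/
open Finset

/-- Lemma 3 (constraint equivalence for System 1): the flow-balance constraint
`∑_{j≠i} (β i j - β j i) = λ i - ∑_{j≠i} λ j * p j i` holding for every station `i`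
is equivalent to the relative utilizations `γ i := π i / (λ i - λdel i)` being equal
across stations. -/
theorem lemma3_constraint_equivalence_system1
    (N : ℕ) (hN : 2 ≤ N)
    (lam : Fin N → ℝ) (hlam : ∀ i, 0 < lam i)
    (p : Fin N → Fin N → ℝ)
    (hp_nonneg : ∀ i j, 0 ≤ p i j)
    (hp_diag : ∀ i, p i i = 0)
    (hp_row : ∀ i, ∑ j, p i j = 1)
    (β : Fin N → Fin N → ℝ)
    (hβ_nonneg : ∀ i j, 0 ≤ β i j)
    (hβ_cap : ∀ i j, β i j ≤ lam i * p i j)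
    (hβ_diag : ∀ i, β i i = 0)
    (lamdel : Fin N → ℝ)
    (hlamdel : ∀ i, lamdel i = ∑ j ∈ Finset.univ.erase i, β i j)
    (hlamdel_lt : ∀ i, lamdel i < lam i)
    (η : Fin N → Fin N → ℝ)
    (hη : ∀ i j, η i j = if i = j then 0 else
            if 0 < lamdel i then β i j / lamdel i else 1 / ((N : ℝ) - 1))
    (P1 : Matrix (Fin N) (Fin N) ℝ)
    (hP1 : ∀ i j, P1 i j = (lam i * p i j - β i j) / (lam i - lamdel i))
    (φ : Matrix (Fin N) (Fin N) ℝ)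
    (hφ : ∀ i j, φ i j = lam j * p j i - β j i)
    (hφ_irr : ∀ i j, ∃ k : ℕ, 1 ≤ k ∧ 0 < (φ ^ k) i j)
    (π : Fin N → ℝ)
    (hπ_pos : ∀ i, 0 < π i)
    (hbal : ∀ i, π i = ∑ j, π j * P1 j i)
    (γ : Fin N → ℝ)
    (hγ : ∀ i, γ i = π i / (lam i - lamdel i)) :
    (∀ i, ∑ j ∈ Finset.univ.erase i, (β i j - β j i)
        = lam i - ∑ j ∈ Finset.univ.erase i, lam j * p j i)
    ↔ (∀ i j, γ i = γ j) := by

  have hc : ∀ i, 0 < lam i - lamdel i := fun i => sub_pos.2 (hlamdel_lt i)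
  have hφ_nonneg : ∀ i j, 0 ≤ φ i j := by
    intro i j; rw [hφ]; exact sub_nonneg.2 (hβ_cap j i)
  have hγ_pos : ∀ i, 0 < γ i := by
    intro i; rw [hγ]; exact div_pos (hπ_pos i) (hc i)
  have hπγ : ∀ i, π i = γ i * (lam i - lamdel i) := by
    intro i; rw [hγ i, div_mul_cancel₀ _ (hc i).ne']
  have hbal' : ∀ i, π i = ∑ j, γ j * φ i j := by
    intro i
    rw [hbal i]
    refine Finset.sum_congr rfl fun j _ => ?_
    rw [hP1, hφ, hγ]
    field_simp
  have hsum_φ : ∀ i, ∑ j, φ i j = ∑ j ∈ Finset.univ.erase i, (lam j * p j i - β j i) := by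
    intro i
    have hii : φ i i = 0 := by rw [hφ, hp_diag, hβ_diag]; ring
    rw [← Finset.sum_erase Finset.univ hii]
    exact Finset.sum_congr rfl fun j _ => hφ i j
  have hkey : ∀ i, ((∑ j ∈ Finset.univ.erase i, (β i j - β j i)
        = lam i - ∑ j ∈ Finset.univ.erase i, lam j * p j i)
      ↔ ∑ j, φ i j = lam i - lamdel i) := by
    intro i
    rw [hsum_φ i, hlamdel i, Finset.sum_sub_distrib, Finset.sum_sub_distrib]
    constructor <;> intro h <;> linarith
  constructor
  · intro hcon
    have hrow : ∀ i, ∑ j, φ i j = lam i - lamdel i := fun i => (hkey i).1 (hcon i)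
    have hne : (Finset.univ : Finset (Fin N)).Nonempty := ⟨⟨0, by omega⟩, Finset.mem_univ _⟩
    obtain ⟨i0, -, hmax⟩ := Finset.exists_max_image (Finset.univ : Finset (Fin N)) γ hne
    have step : ∀ i j, γ i = γ i0 → 0 < φ i j → γ j = γ i0 := by
      intro i j hi hpos
      have h0 : ∑ l, (γ i0 - γ l) * φ i l = 0 := by
        have he : ∑ l, (γ i0 - γ l) * φ i l
            = γ i0 * (∑ l, φ i l) - ∑ l, γ l * φ i l := by
          rw [Finset.mul_sum, ← Finset.sum_sub_distrib]
          exact Finset.sum_congr rfl fun l _ => by ring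
        rw [he, hrow i, ← hbal' i, hπγ i, hi]; ring
      have hterm := (Finset.sum_eq_zero_iff_of_nonneg
        (fun l _ => mul_nonneg (sub_nonneg.2 (hmax l (Finset.mem_univ l)))
          (hφ_nonneg i l))).1 h0 j (Finset.mem_univ j)
      rcases mul_eq_zero.1 hterm with h | h
      · linarith
      · exact absurd h (ne_of_gt hpos)
    have hpow_nonneg : ∀ k i j, 0 ≤ (φ ^ k) i j := by
      intro k
      induction k with
      | zero =>
        intro i j; rw [pow_zero, Matrix.one_apply]
        split <;> norm_num
      | succ k ih =>
        intro i j
        rw [pow_succ, Matrix.mul_apply]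
        exact Finset.sum_nonneg fun l _ => mul_nonneg (ih i l) (hφ_nonneg l j)
    have prop : ∀ k, ∀ i j, γ i = γ i0 → 0 < (φ ^ k) i j → γ j = γ i0 := by
      intro k
      induction k with
      | zero =>
        intro i j hi hpos
        rw [pow_zero, Matrix.one_apply] at hpos
        split at hpos
        · next h => rw [← h]; exact hi
        · exact absurd hpos (lt_irrefl 0)
      | succ k ih =>
        intro i j hi hpos
        rw [pow_succ', Matrix.mul_apply] at hpos
        have hex : ∃ l ∈ (Finset.univ : Finset (Fin N)), (0:ℝ) < φ i l * (φ ^ k) l j := by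
          by_contra hcon2
          push_neg at hcon2
          have : ∑ l, φ i l * (φ ^ k) l j ≤ 0 :=
            Finset.sum_nonpos fun l hl => hcon2 l hl
          linarith
        obtain ⟨l, -, hl⟩ := hex
        have h1 : 0 < φ i l := by
          rcases (hφ_nonneg i l).lt_or_eq with h | h
          · exact h
          · rw [← h, zero_mul] at hl; exact absurd hl (lt_irrefl 0)
        have h2 : 0 < (φ ^ k) l j := by
          rcases (hpow_nonneg k l j).lt_or_eq with h | h
          · exact h
          · rw [← h, mul_zero] at hl; exact absurd hl (lt_irrefl 0)
        exact ih l j (step i l hi h1) h2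
    intro i j
    obtain ⟨ki, -, hki⟩ := hφ_irr i0 i
    obtain ⟨kj, -, hkj⟩ := hφ_irr i0 j
    rw [prop ki i0 i rfl hki, prop kj i0 j rfl hkj]
  · intro hconst i
    apply (hkey i).2
    have h1 : π i = γ i * ∑ j, φ i j := by
      rw [hbal' i, Finset.mul_sum]
      exact Finset.sum_congr rfl fun j _ => by rw [hconst j i]
    have h2 := h1.symm.trans (hπγ i)
    exact mul_left_cancel₀ (hγ_pos i).ne' h2
end

section
/- Lemma 4 (constraint equivalence for System 2): under the stated assumptions, the flow-balance constraint ∑_{j≠i} (α_ij − α_ji) = ∑_{j≠i} (β_ji − β_ij) holding for every station i is equivalent to the relative utilizations being equal across stations, i.e., γ_i = γ_j for all i,j, where γ_i := π_i/(λdel_i + ψ_i). -/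
open Finset

/-- Lemma 4 (constraint equivalence for System 2): the flow-balance constraint
`∑_{j≠i} (α i j - α j i) = ∑_{j≠i} (β j i - β i j)` holding for every station `i`
is equivalent to the relative utilizations `γ i := π i / (λdel i + ψ i)` being equal
across stations. -/
theorem lemma4_constraint_equivalence_system2
    (N : ℕ) (hN : 2 ≤ N)
    (α β : Fin N → Fin N → ℝ)
    (hα_nonneg : ∀ i j, 0 ≤ α i j) (hα_diag : ∀ i, α i i = 0)
    (hβ_nonneg : ∀ i j, 0 ≤ β i j) (hβ_diag : ∀ i, β i i = 0)
    (ψ lamdel : Fin N → ℝ)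
    (hψ : ∀ i, ψ i = ∑ j ∈ Finset.univ.erase i, α i j)
    (hlamdel : ∀ i, lamdel i = ∑ j ∈ Finset.univ.erase i, β i j)
    (hpos : ∀ i, 0 < lamdel i + ψ i)
    (ξ η : Fin N → Fin N → ℝ)
    (hξ : ∀ i j, ξ i j = if i = j then 0 else
            if 0 < ψ i then α i j / ψ i else 1 / ((N : ℝ) - 1))
    (hη : ∀ i j, η i j = if i = j then 0 else
            if 0 < lamdel i then β i j / lamdel i else 1 / ((N : ℝ) - 1))
    (P2 : Matrix (Fin N) (Fin N) ℝ)
    (hP2 : ∀ i j, P2 i j = (α i j + β i j) / (lamdel i + ψ i))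
    (φ : Matrix (Fin N) (Fin N) ℝ)
    (hφ : ∀ i j, φ i j = α j i + β j i)
    (hφ_irr : ∀ i j, ∃ k : ℕ, 1 ≤ k ∧ 0 < (φ ^ k) i j)
    (π : Fin N → ℝ)
    (hπ_pos : ∀ i, 0 < π i)
    (hbal : ∀ i, π i = ∑ j, π j * P2 j i)
    (γ : Fin N → ℝ)
    (hγ : ∀ i, γ i = π i / (lamdel i + ψ i)) :
    (∀ i, ∑ j ∈ Finset.univ.erase i, (α i j - α j i)
        = ∑ j ∈ Finset.univ.erase i, (β j i - β i j))
    ↔ (∀ i j, γ i = γ j) := by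
  classical
  have hcpos : ∀ i, 0 < lamdel i + ψ i := hpos
  have hπγ : ∀ i, π i = γ i * (lamdel i + ψ i) := by
    intro i; rw [hγ, div_mul_cancel₀ _ (ne_of_gt (hcpos i))]
  have hγpos : ∀ i, 0 < γ i := by
    intro i; rw [hγ]; exact div_pos (hπ_pos i) (hcpos i)
  have hφ_nonneg : ∀ i j, 0 ≤ φ i j := by
    intro i j; rw [hφ]; exact add_nonneg (hα_nonneg _ _) (hβ_nonneg _ _)
  have hφ_diag : ∀ i, φ i i = 0 := by
    intro i; rw [hφ, hα_diag, hβ_diag]; ring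
  have hbal' : ∀ i, γ i * (lamdel i + ψ i) = ∑ j, γ j * φ i j := by
    intro i
    rw [← hπγ, hbal i]
    refine Finset.sum_congr rfl fun j _ => ?_
    rw [hP2, hγ, hφ, div_mul_eq_mul_div, mul_div_assoc]
  have hA : ∀ i, lamdel i + ψ i = ∑ j ∈ Finset.univ.erase i, (α i j + β i j) := by
    intro i; rw [hψ, hlamdel, Finset.sum_add_distrib]; ring
  have hB : ∀ i, (∑ j, φ i j) = ∑ j ∈ Finset.univ.erase i, (α j i + β j i) := by
    intro i
    rw [show (∑ j, φ i j) = ∑ j ∈ Finset.univ.erase i, φ i j from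
      (Finset.sum_erase _ (hφ_diag i)).symm]
    exact Finset.sum_congr rfl fun j _ => hφ i j
  have hconstr_iff : ∀ i,
      ((∑ j ∈ Finset.univ.erase i, (α i j - α j i))
        = ∑ j ∈ Finset.univ.erase i, (β j i - β i j))
      ↔ lamdel i + ψ i = ∑ j, φ i j := by
    intro i
    rw [hA, hB, Finset.sum_sub_distrib, Finset.sum_sub_distrib,
      Finset.sum_add_distrib, Finset.sum_add_distrib]
    constructor <;> intro h <;> linarith
  constructor
  · intro hcon
    have hrow : ∀ i, lamdel i + ψ i = ∑ j, φ i j := fun i => (hconstr_iff i).1 (hcon i)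
    have hkey : ∀ i, ∑ j, φ i j * (γ i - γ j) = 0 := by
      intro i
      have h1 := hbal' i
      have h2 := hrow i
      simp only [mul_sub, Finset.sum_sub_distrib]
      have h3 : ∑ j, φ i j * γ i = γ i * (lamdel i + ψ i) := by
        rw [← Finset.sum_mul, ← h2]; ring
      have h4 : ∑ j, φ i j * γ j = γ i * (lamdel i + ψ i) := by
        rw [h1]; exact Finset.sum_congr rfl fun j _ => (mul_comm _ _)
      rw [h3, h4, sub_self]
    have hstep : ∀ i j, (∀ k, γ k ≤ γ i) → 0 < φ i j → γ j = γ i := by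
      intro i j hmax hpφ
      by_contra hne
      have hlt : γ j < γ i := lt_of_le_of_ne (hmax j) hne
      have hposum : 0 < ∑ l, φ i l * (γ i - γ l) := by
        refine Finset.sum_pos' (fun l _ => mul_nonneg (hφ_nonneg i l)
          (by linarith [hmax l])) ⟨j, Finset.mem_univ j, ?_⟩
        exact mul_pos hpφ (by linarith)
      rw [hkey i] at hposum; exact lt_irrefl 0 hposum
    have hpow_nonneg : ∀ k : ℕ, ∀ i j, 0 ≤ (φ ^ k) i j := by
      intro k
      induction k with
      | zero => intro i j; simp [Matrix.one_apply]; split <;> norm_num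
      | succ k ih =>
        intro i j
        rw [pow_succ, Matrix.mul_apply]
        exact Finset.sum_nonneg fun l _ => mul_nonneg (ih i l) (hφ_nonneg l j)
    -- pick a maximizer of γ
    have hne : (Finset.univ : Finset (Fin N)).Nonempty :=
      ⟨⟨0, by omega⟩, Finset.mem_univ _⟩
    obtain ⟨i0, _, hi0⟩ := Finset.exists_max_image Finset.univ γ hne
    have hi0' : ∀ k, γ k ≤ γ i0 := fun k => hi0 k (Finset.mem_univ k)
    have hprop : ∀ k : ℕ, ∀ i j, γ i = γ i0 → 0 < (φ ^ k) i j → γ j = γ i0 := by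
      intro k
      induction k with
      | zero =>
        intro i j hi hp
        rw [pow_zero, Matrix.one_apply] at hp
        by_cases h : i = j
        · subst h; exact hi
        · simp [h] at hp
      | succ k ih =>
        intro i j hi hp
        rw [pow_succ, Matrix.mul_apply] at hp
        obtain ⟨l, _, hl⟩ := Finset.exists_lt_of_sum_lt
          (f := fun _ => (0 : ℝ)) (g := fun l => (φ ^ k) i l * φ l j)
          (by simpa using hp)
        have ha : 0 < (φ ^ k) i l := by
          rcases (hpow_nonneg k i l).lt_or_eq with h | h
          · exact h
          · exfalso; rw [← h, zero_mul] at hl; exact lt_irrefl 0 hl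
        have hb : 0 < φ l j := by
          rcases (hφ_nonneg l j).lt_or_eq with h | h
          · exact h
          · exfalso; rw [← h, mul_zero] at hl; exact lt_irrefl 0 hl
        have hlγ : γ l = γ i0 := ih i l hi ha
        have := hstep l j (fun k => hlγ ▸ hi0' k) hb
        rw [this, hlγ]
    have hall : ∀ j, γ j = γ i0 := by
      intro j
      obtain ⟨k, _, hk⟩ := hφ_irr i0 j
      exact hprop k i0 j rfl hk
    intro i j; rw [hall i, hall j]
  · intro hγeq i
    rw [hconstr_iff i]
    have h1 := hbal' i
    have h2 : ∑ j, γ j * φ i j = γ i * ∑ j, φ i j := by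
      rw [Finset.mul_sum]
      exact Finset.sum_congr rfl fun j _ => by rw [hγeq j i]
    rw [h2] at h1
    exact mul_left_cancel₀ (ne_of_gt (hγpos i)) h1
end

section
/- Lemma 1 (folding of balance equations): a vector π : V → ℝ satisfies the balance equations π_v = ∑_{u ∈ V} π_u·r_uv for all v ∈ V if and only if both of the following hold: (1) the restriction σ of π to the single-server nodes satisfies the reduced balance equations σ_i = ∑_j σ_j·P_ji for all i ∈ {1,…,N}, and (2) for every infinite-server node (i,l) with i ≠ l, π_(i,l) = σ_i·P_il. -/
open Finset

/-- Node set of the queueing network: single-server (station) nodes `Fin N` together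
with infinite-server (road) nodes `(i, l)` with `i ≠ l`. -/
abbrev QNode (N : ℕ) := Fin N ⊕ {q : Fin N × Fin N // q.1 ≠ q.2}

/-- The routing matrix of the queueing network: from single-server node `i` to
infinite-server node `(i, l)` with probability `P i l`; from infinite-server node
`(i, l)` to single-server node `l` with probability `1`; all other entries zero. -/
def QRouting (N : ℕ) (P : Fin N → Fin N → ℝ) : QNode N → QNode N → ℝ
  | Sum.inl i, Sum.inr q => if q.1.1 = i then P i q.1.2 else 0
  | Sum.inr q, Sum.inl l => if q.1.2 = l then 1 else 0
  | _, _ => 0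

/-- Sum over off-diagonal pairs of a function vanishing on the diagonal equals the
full product sum. -/
lemma sum_offdiag_eq {N : ℕ} (g : Fin N × Fin N → ℝ) (h0 : ∀ i, g (i, i) = 0) :
    ∑ q : {q : Fin N × Fin N // q.1 ≠ q.2}, g q.1 = ∑ p : Fin N × Fin N, g p := by
  classical
  rw [← Finset.sum_subtype (Finset.univ.filter fun p : Fin N × Fin N => p.1 ≠ p.2)
      (fun p => by simp) g]
  rw [Finset.sum_filter]
  refine Finset.sum_congr rfl fun p _ => ?_
  by_cases h : p.1 ≠ p.2
  · simp [h]
  · push_neg at h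
    have : g p = 0 := by
      have := h0 p.1
      rwa [show (p.1, p.1) = p by ext <;> simp [h.symm]] at this
    simp [h, this]

/-- Lemma 1 (folding of balance equations): `π : QNode N → ℝ` satisfies the balance
equations `π v = ∑ u, π u * r u v` for all `v` if and only if (1) its restriction to the
single-server nodes satisfies the reduced balance equations `σ i = ∑ j, σ j * P j i`,
and (2) for every infinite-server node `(i, l)` (with `i ≠ l`),
`π (i, l) = σ i * P i l`. -/
theorem folding_of_balance_equations
    (N : ℕ) (hN : 2 ≤ N)
    (P : Fin N → Fin N → ℝ)
    (hP_nonneg : ∀ i j, 0 ≤ P i j)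
    (hP_diag : ∀ i, P i i = 0)
    (hP_row : ∀ i, ∑ j, P i j = 1)
    (π : QNode N → ℝ) :
    (∀ v : QNode N, π v = ∑ u : QNode N, π u * QRouting N P u v)
    ↔ ((∀ i : Fin N, π (Sum.inl i) = ∑ j : Fin N, π (Sum.inl j) * P j i) ∧
       (∀ q : {q : Fin N × Fin N // q.1 ≠ q.2},
          π (Sum.inr q) = π (Sum.inl q.1.1) * P q.1.1 q.1.2)) := by
  classical
  have hsum_inr : ∀ q : {q : Fin N × Fin N // q.1 ≠ q.2},
      ∑ u : QNode N, π u * QRouting N P u (Sum.inr q)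
        = π (Sum.inl q.1.1) * P q.1.1 q.1.2 := by
    intro q
    rw [Fintype.sum_sum_type]
    have h2 : ∑ r : {q : Fin N × Fin N // q.1 ≠ q.2},
        π (Sum.inr r) * QRouting N P (Sum.inr r) (Sum.inr q) = 0 := by
      apply Finset.sum_eq_zero; intro r _; simp [QRouting]
    rw [h2, add_zero]
    have h1 : ∀ i : Fin N, π (Sum.inl i) * QRouting N P (Sum.inl i) (Sum.inr q)
        = if q.1.1 = i then π (Sum.inl i) * P i q.1.2 else 0 := by
      intro i
      show π (Sum.inl i) * (if q.1.1 = i then P i q.1.2 else 0) = _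
      split <;> simp
    simp only [h1]
    rw [Finset.sum_ite_eq Finset.univ q.1.1 (fun i => π (Sum.inl i) * P i q.1.2)]
    simp
  have hsum_inl : ∀ (h2 : ∀ q : {q : Fin N × Fin N // q.1 ≠ q.2},
      π (Sum.inr q) = π (Sum.inl q.1.1) * P q.1.1 q.1.2) (l : Fin N),
      ∑ u : QNode N, π u * QRouting N P u (Sum.inl l)
        = ∑ j : Fin N, π (Sum.inl j) * P j l := by
    intro h2 l
    rw [Fintype.sum_sum_type]
    have ha : ∑ i : Fin N, π (Sum.inl i) * QRouting N P (Sum.inl i) (Sum.inl l) = 0 := by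
      apply Finset.sum_eq_zero; intro i _; simp [QRouting]
    rw [ha, zero_add]
    have hb : ∀ q : {q : Fin N × Fin N // q.1 ≠ q.2},
        π (Sum.inr q) * QRouting N P (Sum.inr q) (Sum.inl l)
          = (fun p : Fin N × Fin N => if p.2 = l then π (Sum.inl p.1) * P p.1 p.2 else 0) q.1 := by
      intro q
      rw [h2 q]
      show _ * (if q.1.2 = l then (1:ℝ) else 0) = _
      by_cases h : q.1.2 = l <;> simp [h]
    rw [Finset.sum_congr rfl fun q _ => hb q]
    rw [sum_offdiag_eq (fun p : Fin N × Fin N => if p.2 = l then π (Sum.inl p.1) * P p.1 p.2 else 0)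
        (fun i => by by_cases h : i = l <;> simp [h, hP_diag])]
    rw [Fintype.sum_prod_type]
    refine Finset.sum_congr rfl fun i _ => ?_
    rw [Finset.sum_ite_eq' Finset.univ l (fun j => π (Sum.inl i) * P i j)]
    simp
  constructor
  · intro hbal
    have h2 : ∀ q : {q : Fin N × Fin N // q.1 ≠ q.2},
        π (Sum.inr q) = π (Sum.inl q.1.1) * P q.1.1 q.1.2 := by
      intro q; rw [hbal (Sum.inr q), hsum_inr q]
    refine ⟨fun i => ?_, h2⟩
    rw [hbal (Sum.inl i), hsum_inl h2 i]
  · rintro ⟨h1, h2⟩ v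
    cases v with
    | inl l => rw [hsum_inl h2 l]; exact h1 l
    | inr q => rw [hsum_inr q]; exact h2 q
end

section
/- Theorem 1 (solution to the MoD Rebalancing Problem, optimality correspondence): let β* be optimal for LP-β (minimize ∑_{i,j} T_ij·β_ij subject to 0 ≤ β_ij ≤ λ_i·p_ij and ∑_{j≠i}(β_ij − β_ji) = λ_i − ∑_{j≠i} λ_j·p_ji for all i) and let α* be optimal for LP-α (minimize ∑_{i,j} T_ij·α_ij subject to α_ij ≥ 0 and ∑_{j≠i}(α_ij − α_ji) = −λ_i + ∑_{j≠i} λ_j·p_ji for all i). Define λdel_i := ∑_{j≠i} β*_ij, ψ_i := ∑_{j≠i} α*_ij, η_ii := 0 and η_ij := β*_ij/λdel_i if λdel_i > 0, η_ij := 1/(N−1) otherwise (j ≠ i), and ξ_ii := 0 and ξ_ij := α*_ij/ψ_i if ψ_i > 0, ξ_ij := 1/(N−1) otherwise (j ≠ i). Then (λdel, ψ, η, ξ) is MRP-feasible, its objective values satisfy ∑_{i,j} T_ij·ξ_ij·ψ_i = ∑_{i,j} T_ij·α*_ij and ∑_{i,j} T_ij·(ξ_ij·ψ_i + η_ij·λdel_i)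 = ∑_{i,j} T_ij·(α*_ij + β*_ij), and for every MRP-feasible (λdel′, ψ′, η′, ξ′) one has ∑_{i,j} T_ij·ξ′_ij·ψ′_i ≥ ∑_{i,j} T_ij·α*_ij and ∑_{i,j} T_ij·(ξ′_ij·ψ′_i + η′_ij·λdel′_i) ≥ ∑_{i,j} T_ij·(α*_ij + β*_ij); i.e., the substituted point simultaneously minimizes both MRP objectives. -/
open Finset

/-- Feasibility for the driver-rebalancing linear program LP-β. -/
def LPBetaFeasible (N : ℕ) (lam : Fin N → ℝ) (p β : Fin N → Fin N → ℝ) : Prop :=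
  (∀ i j, 0 ≤ β i j ∧ β i j ≤ lam i * p i j) ∧
  (∀ i, ∑ j ∈ Finset.univ.erase i, (β i j - β j i)
        = lam i - ∑ j ∈ Finset.univ.erase i, lam j * p j i)

/-- Feasibility for the vehicle-rebalancing linear program LP-α. -/
def LPAlphaFeasible (N : ℕ) (lam : Fin N → ℝ) (p α : Fin N → Fin N → ℝ) : Prop :=
  (∀ i j, 0 ≤ α i j) ∧
  (∀ i, ∑ j ∈ Finset.univ.erase i, (α i j - α j i)
        = -lam i + ∑ j ∈ Finset.univ.erase i, lam j * p j i)

/-- Feasibility for the MoD Rebalancing Problem (MRP). -/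
def MRPFeasible (N : ℕ) (lam : Fin N → ℝ) (p : Fin N → Fin N → ℝ)
    (lamdel ψ : Fin N → ℝ) (η ξ : Fin N → Fin N → ℝ) : Prop :=
  (∀ i, 0 ≤ lamdel i) ∧ (∀ i, 0 ≤ ψ i) ∧
  (∀ i j, 0 ≤ η i j) ∧ (∀ i, η i i = 0) ∧ (∀ i, ∑ j, η i j = 1) ∧
  (∀ i j, 0 ≤ ξ i j) ∧ (∀ i, ξ i i = 0) ∧ (∀ i, ∑ j, ξ i j = 1) ∧
  (∀ i j, lamdel i * η i j ≤ lam i * p i j) ∧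
  (∀ i, lam i - lamdel i
        = ∑ j ∈ Finset.univ.erase i, (lam j * p j i - lamdel j * η j i)) ∧
  (∀ i, lamdel i + ψ i
        = ∑ j ∈ Finset.univ.erase i, (ψ j * ξ j i + lamdel j * η j i))

/-- Theorem 1 (solution to the MoD Rebalancing Problem): substituting optimal solutions
of the two decoupled linear programs yields an MRP-feasible point that simultaneously
minimizes both MRP objectives, with matching objective values. -/
theorem MRP_solution_from_decoupled_LPs
    (N : ℕ) (hN : 2 ≤ N)
    (lam : Fin N → ℝ) (hlam : ∀ i, 0 < lam i)
    (p : Fin N → Fin N → ℝ)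
    (hp_nonneg : ∀ i j, 0 ≤ p i j)
    (hp_diag : ∀ i, p i i = 0)
    (hp_row : ∀ i, ∑ j, p i j = 1)
    (T : Fin N → Fin N → ℝ)
    (hT_pos : ∀ i j, i ≠ j → 0 < T i j)
    (hT_diag : ∀ i, T i i = 0)
    (βs : Fin N → Fin N → ℝ)
    (hβs_feas : LPBetaFeasible N lam p βs)
    (hβs_opt : ∀ β, LPBetaFeasible N lam p β →
        ∑ i, ∑ j, T i j * βs i j ≤ ∑ i, ∑ j, T i j * β i j)
    (αs : Fin N → Fin N → ℝ)
    (hαs_feas : LPAlphaFeasible N lam p αs)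
    (hαs_opt : ∀ α, LPAlphaFeasible N lam p α →
        ∑ i, ∑ j, T i j * αs i j ≤ ∑ i, ∑ j, T i j * α i j)
    (lamdel ψ : Fin N → ℝ)
    (hlamdel : ∀ i, lamdel i = ∑ j ∈ Finset.univ.erase i, βs i j)
    (hψ : ∀ i, ψ i = ∑ j ∈ Finset.univ.erase i, αs i j)
    (η ξ : Fin N → Fin N → ℝ)
    (hη : ∀ i j, η i j = if i = j then 0 else
            if 0 < lamdel i then βs i j / lamdel i else 1 / ((N : ℝ) - 1))
    (hξ : ∀ i j, ξ i j = if i = j then 0 else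
            if 0 < ψ i then αs i j / ψ i else 1 / ((N : ℝ) - 1)) :
    MRPFeasible N lam p lamdel ψ η ξ ∧
    (∑ i, ∑ j, T i j * (ξ i j * ψ i)) = ∑ i, ∑ j, T i j * αs i j ∧
    (∑ i, ∑ j, T i j * (ξ i j * ψ i + η i j * lamdel i))
        = ∑ i, ∑ j, T i j * (αs i j + βs i j) ∧
    (∀ lamdel' ψ' : Fin N → ℝ, ∀ η' ξ' : Fin N → Fin N → ℝ,
      MRPFeasible N lam p lamdel' ψ' η' ξ' →
        (∑ i, ∑ j, T i j * αs i j ≤ ∑ i, ∑ j, T i j * (ξ' i j * ψ' i)) ∧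
        (∑ i, ∑ j, T i j * (αs i j + βs i j)
            ≤ ∑ i, ∑ j, T i j * (ξ' i j * ψ' i + η' i j * lamdel' i))) := by
  
  classical
  obtain ⟨hβbd, hβbal⟩ := hβs_feas
  obtain ⟨hαnn, hαbal⟩ := hαs_feas
  have hψnn : ∀ i, 0 ≤ ψ i := fun i => by
    rw [hψ i]; exact Finset.sum_nonneg fun j _ => hαnn i j
  have hldnn : ∀ i, 0 ≤ lamdel i := fun i => by
    rw [hlamdel i]; exact Finset.sum_nonneg fun j _ => (hβbd i j).1
  have hαzero : ∀ i, ¬ 0 < ψ i → ∀ j, j ≠ i → αs i j = 0 := by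
    intro i h j hj
    have hz : ψ i = 0 := le_antisymm (not_lt.mp h) (hψnn i)
    rw [hψ i] at hz
    exact (Finset.sum_eq_zero_iff_of_nonneg fun j _ => hαnn i j).mp hz j
      (Finset.mem_erase.mpr ⟨hj, Finset.mem_univ j⟩)
  have hβzero : ∀ i, ¬ 0 < lamdel i → ∀ j, j ≠ i → βs i j = 0 := by
    intro i h j hj
    have hz : lamdel i = 0 := le_antisymm (not_lt.mp h) (hldnn i)
    rw [hlamdel i] at hz
    exact (Finset.sum_eq_zero_iff_of_nonneg fun j _ => (hβbd i j).1).mp hz j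
      (Finset.mem_erase.mpr ⟨hj, Finset.mem_univ j⟩)
  have hξψ : ∀ i j, i ≠ j → ξ i j * ψ i = αs i j := by
    intro i j hij
    rw [hξ i j, if_neg hij]
    by_cases h : 0 < ψ i
    · rw [if_pos h, div_mul_cancel₀ _ (ne_of_gt h)]
    · rw [if_neg h, hαzero i h j hij.symm]
      have hz : ψ i = 0 := le_antisymm (not_lt.mp h) (hψnn i)
      rw [hz, mul_zero]
  have hetalam : ∀ i j, i ≠ j → η i j * lamdel i = βs i j := by
    intro i j hij
    rw [hη i j, if_neg hij]
    by_cases h : 0 < lamdel i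
    · rw [if_pos h, div_mul_cancel₀ _ (ne_of_gt h)]
    · rw [if_neg h, hβzero i h j hij.symm]
      have hz : lamdel i = 0 := le_antisymm (not_lt.mp h) (hldnn i)
      rw [hz, mul_zero]
  have hN0 : (0 : ℝ) ≤ (N : ℝ) - 1 := by
    have : (2 : ℝ) ≤ (N : ℝ) := by exact_mod_cast hN
    linarith
  have hN1 : ((N : ℝ) - 1) ≠ 0 := by
    have : (2 : ℝ) ≤ (N : ℝ) := by exact_mod_cast hN
    linarith
  have hcard : ∀ i : Fin N, ((Finset.univ.erase i).card : ℝ) = (N : ℝ) - 1 := by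
    intro i
    rw [Finset.card_erase_of_mem (Finset.mem_univ i), Finset.card_univ, Fintype.card_fin]
    push_cast [Nat.cast_sub (by omega : 1 ≤ N)]
    ring
  -- row sums
  have hηrow : ∀ i, ∑ j, η i j = 1 := by
    intro i
    rw [← Finset.sum_erase_add _ _ (Finset.mem_univ i), hη i i, if_pos rfl, add_zero]
    by_cases h : 0 < lamdel i
    · rw [Finset.sum_congr rfl fun j hj => by
        rw [hη i j, if_neg (Finset.ne_of_mem_erase hj).symm, if_pos h]]
      rw [← Finset.sum_div, ← hlamdel i, div_self (ne_of_gt h)]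
    · rw [Finset.sum_congr rfl fun j hj => by
        rw [hη i j, if_neg (Finset.ne_of_mem_erase hj).symm, if_neg h]]
      rw [Finset.sum_const, nsmul_eq_mul, hcard i]
      field_simp
  have hξrow : ∀ i, ∑ j, ξ i j = 1 := by
    intro i
    rw [← Finset.sum_erase_add _ _ (Finset.mem_univ i), hξ i i, if_pos rfl, add_zero]
    by_cases h : 0 < ψ i
    · rw [Finset.sum_congr rfl fun j hj => by
        rw [hξ i j, if_neg (Finset.ne_of_mem_erase hj).symm, if_pos h]]
      rw [← Finset.sum_div, ← hψ i, div_self (ne_of_gt h)]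
    · rw [Finset.sum_congr rfl fun j hj => by
        rw [hξ i j, if_neg (Finset.ne_of_mem_erase hj).symm, if_neg h]]
      rw [Finset.sum_const, nsmul_eq_mul, hcard i]
      field_simp
  -- key balance identities
  have key1 : ∀ i, lamdel i - ∑ j ∈ Finset.univ.erase i, βs j i
      = lam i - ∑ j ∈ Finset.univ.erase i, lam j * p j i := by
    intro i
    have h := hβbal i
    rw [Finset.sum_sub_distrib, ← hlamdel i] at h
    linarith
  have key2 : ∀ i, ψ i - ∑ j ∈ Finset.univ.erase i, αs j i
      = -lam i + ∑ j ∈ Finset.univ.erase i, lam j * p j i := by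
    intro i
    have h := hαbal i
    rw [Finset.sum_sub_distrib, ← hψ i] at h
    linarith
  refine ⟨⟨hldnn, hψnn, ?_, ?_, hηrow, ?_, ?_, hξrow, ?_, ?_, ?_⟩, ?_, ?_, ?_⟩
  · -- η nonneg
    intro i j
    rw [hη i j]
    split
    · exact le_refl 0
    split
    · exact div_nonneg (hβbd i j).1 (le_of_lt (by assumption))
    · exact div_nonneg zero_le_one hN0
  · intro i; rw [hη i i, if_pos rfl]
  · -- ξ nonneg
    intro i j
    rw [hξ i j]
    split
    · exact le_refl 0
    split
    · exact div_nonneg (hαnn i j) (le_of_lt (by assumption))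
    · exact div_nonneg zero_le_one hN0
  · intro i; rw [hξ i i, if_pos rfl]
  · -- capacity constraint
    intro i j
    by_cases hij : i = j
    · subst hij
      rw [hη i i, if_pos rfl, mul_zero, hp_diag i, mul_zero]
    · rw [mul_comm, hetalam i j hij]
      exact (hβbd i j).2
  · -- balance 1
    intro i
    rw [Finset.sum_congr rfl fun j hj => by
      rw [mul_comm (lamdel j), hetalam j i (Finset.ne_of_mem_erase hj)]]
    rw [Finset.sum_sub_distrib]
    linarith [key1 i]
  · -- balance 2
    intro i
    rw [Finset.sum_congr rfl fun j hj => by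
      rw [mul_comm (ψ j), hξψ j i (Finset.ne_of_mem_erase hj),
          mul_comm (lamdel j), hetalam j i (Finset.ne_of_mem_erase hj)]]
    rw [Finset.sum_add_distrib]
    linarith [key1 i, key2 i]
  · -- first objective equality
    refine Finset.sum_congr rfl fun i _ => Finset.sum_congr rfl fun j _ => ?_
    by_cases hij : i = j
    · subst hij; rw [hT_diag]; ring
    · rw [hξψ i j hij]
  · -- second objective equality
    refine Finset.sum_congr rfl fun i _ => Finset.sum_congr rfl fun j _ => ?_
    by_cases hij : i = j
    · subst hij; rw [hT_diag]; ring
    · rw [hξψ i j hij, hetalam i j hij]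
  · -- optimality
    intro lamdel' ψ' η' ξ' hfeas
    obtain ⟨h1, h2, h3, h4, h5, h6, h7, h8, h9, h10, h11⟩ := hfeas
    have hη'row : ∀ i, ∑ j ∈ Finset.univ.erase i, η' i j = 1 := by
      intro i
      have := h5 i
      rw [← Finset.sum_erase_add _ _ (Finset.mem_univ i), h4 i, add_zero] at this
      exact this
    have hξ'row : ∀ i, ∑ j ∈ Finset.univ.erase i, ξ' i j = 1 := by
      intro i
      have := h8 i
      rw [← Finset.sum_erase_add _ _ (Finset.mem_univ i), h7 i, add_zero] at this
      exact this
    have key10 : ∀ i, lam i - lamdel' i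
        = (∑ j ∈ Finset.univ.erase i, lam j * p j i)
          - ∑ j ∈ Finset.univ.erase i, lamdel' j * η' j i := by
      intro i
      rw [h10 i, Finset.sum_sub_distrib]
    have key11 : ∀ i, lamdel' i + ψ' i
        = (∑ j ∈ Finset.univ.erase i, ψ' j * ξ' j i)
          + ∑ j ∈ Finset.univ.erase i, lamdel' j * η' j i := by
      intro i
      rw [h11 i, Finset.sum_add_distrib]
    have hβ'feas : LPBetaFeasible N lam p (fun i j => η' i j * lamdel' i) := by
      constructor
      · intro i j
        refine ⟨mul_nonneg (h3 i j) (h1 i), ?_⟩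
        show η' i j * lamdel' i ≤ lam i * p i j
        rw [mul_comm (η' i j)]
        exact h9 i j
      · intro i
        rw [Finset.sum_sub_distrib]
        have e1 : ∑ j ∈ Finset.univ.erase i, η' i j * lamdel' i = lamdel' i := by
          rw [← Finset.sum_mul, hη'row i, one_mul]
        have e2 : ∑ j ∈ Finset.univ.erase i, η' j i * lamdel' j
            = ∑ j ∈ Finset.univ.erase i, lamdel' j * η' j i :=
          Finset.sum_congr rfl fun j _ => mul_comm _ _
        rw [e1, e2]
        linarith [key10 i]
    have hα'feas : LPAlphaFeasible N lam p (fun i j => ξ' i j * ψ' i) := by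
      constructor
      · intro i j
        exact mul_nonneg (h6 i j) (h2 i)
      · intro i
        rw [Finset.sum_sub_distrib]
        have e1 : ∑ j ∈ Finset.univ.erase i, ξ' i j * ψ' i = ψ' i := by
          rw [← Finset.sum_mul, hξ'row i, one_mul]
        have e2 : ∑ j ∈ Finset.univ.erase i, ξ' j i * ψ' j
            = ∑ j ∈ Finset.univ.erase i, ψ' j * ξ' j i :=
          Finset.sum_congr rfl fun j _ => mul_comm _ _
        rw [e1, e2]
        linarith [key10 i, key11 i]
    have hA := hαs_opt _ hα'feas
    have hB := hβs_opt _ hβ'feas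
    constructor
    · exact hA
    · have split1 : ∑ i, ∑ j, T i j * (αs i j + βs i j)
          = (∑ i, ∑ j, T i j * αs i j) + ∑ i, ∑ j, T i j * βs i j := by
        simp [mul_add, Finset.sum_add_distrib]
      have split2 : ∑ i, ∑ j, T i j * (ξ' i j * ψ' i + η' i j * lamdel' i)
          = (∑ i, ∑ j, T i j * (ξ' i j * ψ' i))
            + ∑ i, ∑ j, T i j * (η' i j * lamdel' i) := by
        simp [mul_add, Finset.sum_add_distrib]
      rw [split1, split2]
      exact add_le_add hA hB
end

section
/- Alignment of the two MRP objectives: any MRP-feasible tuple (λdel, ψ, η, ξ) that minimizes the combined objective ∑_{i,j} T_ij·(ξ_ij·ψ_i + η_ij·λdel_i) over the MRP-feasible set also minimizes the rebalancing-vehicle objective ∑_{i,j} T_ij·ξ_ij·ψ_i over the MRP-feasible set. -/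
open Finset

/-- Alignment of the two MRP objectives: any MRP-feasible tuple minimizing the combined
objective `∑ T_ij (ξ_ij ψ_i + η_ij λdel_i)` over the MRP-feasible set also minimizes the
rebalancing-vehicle objective `∑ T_ij ξ_ij ψ_i` over the MRP-feasible set. -/
theorem MRP_objectives_aligned
    (N : ℕ) (hN : 2 ≤ N)
    (lam : Fin N → ℝ) (hlam : ∀ i, 0 < lam i)
    (p : Fin N → Fin N → ℝ)
    (hp_nonneg : ∀ i j, 0 ≤ p i j)
    (hp_diag : ∀ i, p i i = 0)
    (hp_row : ∀ i, ∑ j, p i j = 1)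
    (T : Fin N → Fin N → ℝ)
    (hT_pos : ∀ i j, i ≠ j → 0 < T i j)
    (hT_diag : ∀ i, T i i = 0)
    (lamdel ψ : Fin N → ℝ) (η ξ : Fin N → Fin N → ℝ)
    (hfeas : MRPFeasible N lam p lamdel ψ η ξ)
    (hopt : ∀ lamdel' ψ' : Fin N → ℝ, ∀ η' ξ' : Fin N → Fin N → ℝ,
      MRPFeasible N lam p lamdel' ψ' η' ξ' →
        ∑ i, ∑ j, T i j * (ξ i j * ψ i + η i j * lamdel i)
          ≤ ∑ i, ∑ j, T i j * (ξ' i j * ψ' i + η' i j * lamdel' i)) :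
    ∀ lamdel' ψ' : Fin N → ℝ, ∀ η' ξ' : Fin N → Fin N → ℝ,
      MRPFeasible N lam p lamdel' ψ' η' ξ' →
        ∑ i, ∑ j, T i j * (ξ i j * ψ i) ≤ ∑ i, ∑ j, T i j * (ξ' i j * ψ' i) := by
  obtain ⟨h1, h2, h3, h4, h5, h6, h7, h8, h9, h10, h11⟩ := hfeas
  intro lamdel' ψ' η' ξ' hB
  obtain ⟨g1, g2, g3, g4, g5, g6, g7, g8, g9, g10, g11⟩ := hB
  have hC : MRPFeasible N lam p lamdel ψ' η ξ' := by
    refine ⟨h1, g2, h3, h4, h5, g6, g7, g8, h9, h10, ?_⟩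
    intro i
    have e1 := h10 i
    have e2 := g10 i
    have e3 := g11 i
    rw [Finset.sum_sub_distrib] at e1 e2
    rw [Finset.sum_add_distrib] at e3 ⊢
    linarith
  have key := hopt lamdel ψ' η ξ' hC
  simp only [mul_add, Finset.sum_add_distrib] at key
  linarith
end

section
/- Converse correspondence in Theorem 1: if (λdel, ψ, η, ξ) is MRP-feasible, then β_ij := λdel_i·η_ij is feasible for LP-β (it satisfies 0 ≤ β_ij ≤ λ_i·p_ij, λdel_i = ∑_{j≠i} β_ij, and ∑_{j≠i}(β_ij − β_ji) = λ_i − ∑_{j≠i} λ_j·p_ji for all i) and α_ij := ψ_i·ξ_ij is feasible for LP-α (it satisfies α_ij ≥ 0 and ∑_{j≠i}(α_ij − α_ji) = −λ_i + ∑_{j≠i} λ_j·p_ji for all i); moreover the objective values agree: ∑_{i,j} T_ij·ξ_ij·ψ_i = ∑_{i,j} T_ij·α_ij and ∑_{i,j} T_ij·η_ij·λdel_i = ∑_{i,j} T_ij·β_ij. -/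
open Finset

/-- Converse correspondence in Theorem 1: given an MRP-feasible tuple, the matrices
`β i j := λdel i * η i j` and `α i j := ψ i * ξ i j` are feasible for LP-β and LP-α
respectively, and the objective values agree. -/
theorem MRP_to_decoupled_LPs
    (N : ℕ) (hN : 2 ≤ N)
    (lam : Fin N → ℝ) (hlam : ∀ i, 0 < lam i)
    (p : Fin N → Fin N → ℝ)
    (hp_nonneg : ∀ i j, 0 ≤ p i j)
    (hp_diag : ∀ i, p i i = 0)
    (hp_row : ∀ i, ∑ j, p i j = 1)
    (T : Fin N → Fin N → ℝ)
    (hT_pos : ∀ i j, i ≠ j → 0 < T i j)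
    (hT_diag : ∀ i, T i i = 0)
    (lamdel ψ : Fin N → ℝ) (η ξ : Fin N → Fin N → ℝ)
    (hfeas : MRPFeasible N lam p lamdel ψ η ξ)
    (β α : Fin N → Fin N → ℝ)
    (hβ : ∀ i j, β i j = lamdel i * η i j)
    (hα : ∀ i j, α i j = ψ i * ξ i j) :
    (∀ i j, 0 ≤ β i j ∧ β i j ≤ lam i * p i j) ∧
    (∀ i, lamdel i = ∑ j ∈ Finset.univ.erase i, β i j) ∧
    (∀ i, ∑ j ∈ Finset.univ.erase i, (β i j - β j i)
          = lam i - ∑ j ∈ Finset.univ.erase i, lam j * p j i) ∧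
    (∀ i j, 0 ≤ α i j) ∧
    (∀ i, ∑ j ∈ Finset.univ.erase i, (α i j - α j i)
          = -lam i + ∑ j ∈ Finset.univ.erase i, lam j * p j i) ∧
    (∑ i, ∑ j, T i j * (ξ i j * ψ i)) = ∑ i, ∑ j, T i j * α i j ∧
    (∑ i, ∑ j, T i j * (η i j * lamdel i)) = ∑ i, ∑ j, T i j * β i j := by

  obtain ⟨hld, hψ, hηn, hηd, hηr, hξn, hξd, hξr, hcap, hbal1, hbal2⟩ := hfeas
  have hrowβ : ∀ i, lamdel i = ∑ j ∈ Finset.univ.erase i, β i j := by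
    intro i
    have : ∑ j ∈ Finset.univ.erase i, β i j
        = lamdel i * ∑ j ∈ Finset.univ.erase i, η i j := by
      rw [Finset.mul_sum]; exact Finset.sum_congr rfl (fun j _ => hβ i j)
    rw [this, Finset.sum_erase_eq_sub (Finset.mem_univ i), hηr i, hηd i]
    ring
  have hrowα : ∀ i, ψ i = ∑ j ∈ Finset.univ.erase i, α i j := by
    intro i
    have : ∑ j ∈ Finset.univ.erase i, α i j
        = ψ i * ∑ j ∈ Finset.univ.erase i, ξ i j := by
      rw [Finset.mul_sum]; exact Finset.sum_congr rfl (fun j _ => hα i j)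
    rw [this, Finset.sum_erase_eq_sub (Finset.mem_univ i), hξr i, hξd i]
    ring
  refine ⟨fun i j => ⟨by rw [hβ]; exact mul_nonneg (hld i) (hηn i j), by rw [hβ]; exact hcap i j⟩,
    hrowβ, ?_, fun i j => by rw [hα]; exact mul_nonneg (hψ i) (hξn i j), ?_, ?_, ?_⟩
  · intro i
    have h1 := hbal1 i
    rw [Finset.sum_sub_distrib] at h1 ⊢
    have hβi : ∑ j ∈ Finset.univ.erase i, β j i
        = ∑ j ∈ Finset.univ.erase i, lamdel j * η j i :=
      Finset.sum_congr rfl (fun j _ => hβ j i)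
    rw [hβi, ← hrowβ i]
    linarith
  · intro i
    have h1 := hbal1 i
    have h2 := hbal2 i
    rw [Finset.sum_sub_distrib] at h1
    rw [Finset.sum_add_distrib] at h2
    rw [Finset.sum_sub_distrib]
    have hαi : ∑ j ∈ Finset.univ.erase i, α j i
        = ∑ j ∈ Finset.univ.erase i, ψ j * ξ j i :=
      Finset.sum_congr rfl (fun j _ => hα j i)
    rw [hαi, ← hrowα i]
    linarith
  · exact Finset.sum_congr rfl fun i _ => Finset.sum_congr rfl fun j _ => by rw [hα]; ring
  · exact Finset.sum_congr rfl fun i _ => Finset.sum_congr rfl fun j _ => by rw [hβ]; ring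
end
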